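/- Let F : X × X → X be associative and quasitrivial and assume X is finite. Then F is ≤-preserving for some total ordering ≤ on X if and only if the weak ordering ≾_F is 2-quasilinear, i.e., every ∼_F-class that is not minimal for ≾_F has at most two elements. -/

import Mathlib

def Assoc {X : Type*} (F : X → X → X) : Prop :=
  ∀ x y z, F (F x y) z = F x (F y z)

def Quasitrivial {X : Type*} (F : X → X → X) : Prop :=
  ∀ x y, F x y = x ∨ F x y = y

/-- The weak ordering associated with `F`: `x ≾_F y` iff `F x y = y` or `F y x = y`. -/
def wle {X : Type*} (F : X → X → X) (x y : X) : Prop :=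
  F x y = y ∨ F y x = y

/-- Strict part of a weak ordering `R`. -/
def SLT {X : Type*} (R : X → X → Prop) (x y : X) : Prop := R x y ∧ ¬ R y x

/-- Symmetric part of a weak ordering `R`. -/
def SIM {X : Type*} (R : X → X → Prop) (x y : X) : Prop := R x y ∧ R y x

/-- A weak ordering is 2-quasilinear if there are no pairwise distinct `a,b,c,d`
with `a ≺ b ∼ c ∼ d`. -/
def TwoQuasilinear {X : Type*} (R : X → X → Prop) : Prop :=
  ¬ ∃ a b c d : X, (a ≠ b ∧ a ≠ c ∧ a ≠ d ∧ b ≠ c ∧ b ≠ d ∧ c ≠ d) ∧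
      SLT R a b ∧ SIM R b c ∧ SIM R c d

/-!
On a `∼_F`-class `F` is a projection, and for `x ≺_F y` both `F x y` and `F y x` equal `y`.
If `F` preserves a total order `≤` and `a ≺ b ∼ c ∼ d`, two of `b, c, d` lie on the same side
of `a`, and monotonicity of `F` at `a` forces those two to coincide. Conversely, a compatible
order is built by induction: the top class of `S` absorbs the rest of `S`; if it is all of `S`,
any order works because `F` is a projection there, and otherwise it has at most two elements,
which are placed one below and one above an order that works for the rest.
-/

open Set Function OrderDual

section WeakOrdering

variable {X : Type*} {F : X → X → X}

lemma Quasitrivial.idem (hQ : Quasitrivial F) (x : X) : F x x = x :=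
  (hQ x x).elim id id

lemma Quasitrivial.apply_mem (hQ : Quasitrivial F) {s : Set X} {x y : X} (hx : x ∈ s)
    (hy : y ∈ s) : F x y ∈ s := by
  rcases hQ x y with h | h <;> rw [h] <;> assumption

lemma wle_refl (hQ : Quasitrivial F) (x : X) : wle F x x :=
  Or.inl (hQ.idem x)

lemma wle_total (hQ : Quasitrivial F) (x y : X) : wle F x y ∨ wle F y x :=
  (hQ x y).elim (fun h => Or.inr (Or.inr h)) (fun h => Or.inl (Or.inl h))

lemma wle_trans (hA : Assoc F) (hQ : Quasitrivial F) {x y z : X}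
    (hxy : wle F x y) (hyz : wle F y z) : wle F x z := by
  rcases hxy with hxy | hxy <;> rcases hyz with hyz | hyz
  · left; rw [← hyz, ← hA, hxy]
  · rcases hQ z x with h | h
    · exact Or.inr h
    · have h' := hA z x y
      rw [h, hxy, hyz] at h'
      exact h' ▸ Or.inl hxy
  · rcases hQ z x with h | h
    · exact Or.inr h
    · have h' := hA y z x
      rw [hyz, h, hxy] at h'
      exact h' ▸ Or.inl hyz
  · right
    have h' := hA z y x
    rwa [hyz, hxy, hyz] at h'

lemma slt_of_slt_of_wle (hA : Assoc F) (hQ : Quasitrivial F) {x y z : X}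
    (hxy : SLT (wle F) x y) (hyz : wle F y z) : SLT (wle F) x z :=
  ⟨wle_trans hA hQ hxy.1 hyz, fun hzx => hxy.2 (wle_trans hA hQ hyz hzx)⟩

lemma SIM.trans (hA : Assoc F) (hQ : Quasitrivial F) {x y z : X}
    (hxy : SIM (wle F) x y) (hyz : SIM (wle F) y z) : SIM (wle F) x z :=
  ⟨wle_trans hA hQ hxy.1 hyz.1, wle_trans hA hQ hyz.2 hxy.2⟩

lemma absorb_of_slt (hQ : Quasitrivial F) {x y : X} (h : SLT (wle F) x y) :
    F x y = y ∧ F y x = y := by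
  have hyx : F y x ≠ x ∧ F x y ≠ x := not_or.1 h.2
  exact ⟨(hQ x y).resolve_left hyx.2, (hQ y x).resolve_right hyx.1⟩

lemma proj_of_sim (hQ : Quasitrivial F) {x y : X} (h : SIM (wle F) x y) :
    (F x y = x ∧ F y x = y) ∨ (F x y = y ∧ F y x = x) := by
  rcases hQ x y with hxy | hxy <;> rcases hQ y x with hyx | hyx
  · exact Or.inl ⟨hxy, hyx⟩
  · obtain rfl : x = y := by rcases h.1 with h1 | h1 <;> simp_all
    exact Or.inl ⟨hxy, hyx⟩
  · obtain rfl : x = y := by rcases h.2 with h2 | h2 <;> simp_all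
    exact Or.inl ⟨hxy, hyx⟩
  · exact Or.inr ⟨hxy, hyx⟩


lemma false_of_proj_right_of_proj_left (hA : Assoc F) (hQ : Quasitrivial F) {p q r : X}
    (hpq : p ≠ q) (hqr : q ≠ r) (hpq₁ : F p q = q) (hpq₂ : F q p = p)
    (hqr₁ : F q r = q) (hqr₂ : F r q = r) : False := by
  rcases hQ p r with hpr | hpr
  · rcases hQ r p with hrp | hrp
    · have h := hA q r p
      rw [hqr₁, hpq₂, hrp, hqr₁] at h
      exact hpq h
    · have h := hA r p q
      rw [hrp, hpq₁, hqr₂] at h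
      exact hqr h
  · have h := hA q p r
    rw [hpq₂, hpr, hqr₁] at h
    exact hqr h.symm

lemma proj_right_of_proj_right (hA : Assoc F) (hQ : Quasitrivial F) {p q r : X}
    (hpq : p ≠ q) (hqr : q ≠ r) (hsim : SIM (wle F) q r) (hpq₁ : F p q = q)
    (hpq₂ : F q p = p) : F q r = r ∧ F r q = q :=
  (proj_of_sim hQ hsim).resolve_left fun h =>
    false_of_proj_right_of_proj_left hA hQ hpq hqr hpq₁ hpq₂ h.1 h.2

lemma proj_of_forall_sim (hA : Assoc F) (hQ : Quasitrivial F) {s : Set X}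
    (hs : ∀ x ∈ s, ∀ y ∈ s, SIM (wle F) x y) :
    (∀ x ∈ s, ∀ y ∈ s, F x y = x) ∨ (∀ x ∈ s, ∀ y ∈ s, F x y = y) := by
  refine or_iff_not_imp_left.2 fun h => ?_
  obtain ⟨a, ha, b, hb, hab⟩ : ∃ a ∈ s, ∃ b ∈ s, F a b ≠ a := by simpa using h
  have hab' : a ≠ b := by rintro rfl; exact hab (hQ.idem a)
  have hright : F a b = b ∧ F b a = a :=
    (proj_of_sim hQ (hs a ha b hb)).resolve_left fun h => hab h.1
  intro x hx y hy
  rcases eq_or_ne x y with rfl | hxy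
  · exact hQ.idem x
  rcases eq_or_ne b x with rfl | hbx
  · exact (proj_right_of_proj_right hA hQ hab' hxy (hs b hx y hy) hright.1 hright.2).1
  · have hbx' := proj_right_of_proj_right hA hQ hab' hbx (hs b hb x hx) hright.1 hright.2
    exact (proj_right_of_proj_right hA hQ hbx hxy (hs x hx y hy) hbx'.1 hbx'.2).1

end WeakOrdering

def MonotoneOn₂ {X β : Type*} [Preorder β] (F : X → X → X) (f : X → β) (s : Set X) : Prop :=
  ∀ ⦃x x' y y' : X⦄, x ∈ s → x' ∈ s → y ∈ s → y' ∈ s → f x ≤ f x' → f y ≤ f y' →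
    f (F x y) ≤ f (F x' y')

namespace MonotoneOn₂

variable {X β : Type*} {F : X → X → X} {f g : X → β} {s : Set X}

lemma congr [Preorder β] (hQ : Quasitrivial F) (hf : MonotoneOn₂ F f s) (hfg : EqOn f g s) :
    MonotoneOn₂ F g s := by
  intro x x' y y' hx hx' hy hy' hxx' hyy'
  rw [← hfg hx, ← hfg hx'] at hxx'
  rw [← hfg hy, ← hfg hy'] at hyy'
  rw [← hfg (hQ.apply_mem hx hy), ← hfg (hQ.apply_mem hx' hy')]
  exact hf hx hx' hy hy' hxx' hyy'

lemma of_proj [Preorder β]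
    (h : (∀ x ∈ s, ∀ y ∈ s, F x y = x) ∨ (∀ x ∈ s, ∀ y ∈ s, F x y = y)) : MonotoneOn₂ F f s := by
  intro x x' y y' hx hx' hy hy' hxx' hyy'
  rcases h with h | h <;> rwa [h x hx y hy, h x' hx' y' hy']

end MonotoneOn₂

section Extension

variable {X β : Type*} [LinearOrder β] {F : X → X → X} {f : X → β} {s T : Set X}

lemma apply_mem_of_absorbs (hQ : Quasitrivial F)
    (habs : ∀ t ∈ T, ∀ z ∈ s, F t z = t ∧ F z t = t) {x y : X} (hx : x ∈ s ∪ T)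
    (hy : y ∈ s ∪ T) (h : x ∈ T ∨ y ∈ T) : F x y ∈ T := by
  rcases h with hxT | hyT
  · rcases hy with hys | hyT
    · rw [(habs x hxT y hys).1]; exact hxT
    · exact hQ.apply_mem hxT hyT
  · rcases hx with hxs | hxT
    · rw [(habs y hyT x hxs).2]; exact hyT
    · exact hQ.apply_mem hxT hyT

lemma apply_eq_of_isGreatest (hQ : Quasitrivial F)
    (habs : ∀ t ∈ T, ∀ z ∈ s, F t z = t ∧ F z t = t) (hinj : InjOn f (s ∪ T))
    (hext : ∀ t ∈ T, (∀ z ∈ s ∪ T, f z ≤ f t) ∨ (∀ z ∈ s ∪ T, f t ≤ f z))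
    {x x' y y' : X} (hx : x ∈ T) (hx' : x' ∈ s ∪ T) (hy : y ∈ s ∪ T) (hy' : y' ∈ s ∪ T)
    (hmax : ∀ z ∈ s ∪ T, f z ≤ f x) (hxx' : f x ≤ f x') (hyy' : f y ≤ f y')
    (hxy : F x y = x) : F x' y' = x := by
  have hxS : x ∈ s ∪ T := mem_union_right s hx
  obtain rfl : x' = x := hinj hx' hxS (le_antisymm (hmax x' hx') hxx')
  refine (hQ x' y').elim id fun h => ?_
  rw [h]
  by_contra hne
  have hy'T : y' ∈ T := hy'.resolve_left fun hy's => hne (h.symm.trans (habs x' hx y' hy's).1)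
  have hmin : ∀ z ∈ s ∪ T, f y' ≤ f z := (hext y' hy'T).resolve_left fun hmax' =>
    hne (hinj hy' hxS (le_antisymm (hmax y' hy') (hmax' x' hxS)))
  obtain rfl : y = y' := hinj hy hy' (le_antisymm hyy' (hmin y hy))
  exact hne (h.symm.trans hxy)

lemma apply_le_of_apply_mem (hQ : Quasitrivial F)
    (habs : ∀ t ∈ T, ∀ z ∈ s, F t z = t ∧ F z t = t) (hinj : InjOn f (s ∪ T))
    (hext : ∀ t ∈ T, (∀ z ∈ s ∪ T, f z ≤ f t) ∨ (∀ z ∈ s ∪ T, f t ≤ f z))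
    {x x' y y' : X} (hx : x ∈ s ∪ T) (hx' : x' ∈ s ∪ T) (hy : y ∈ s ∪ T) (hy' : y' ∈ s ∪ T)
    (hxx' : f x ≤ f x') (hyy' : f y ≤ f y') (hT : F x y ∈ T) : f (F x y) ≤ f (F x' y') := by
  rcases hext _ hT with hmax | hmin
  · suffices F x' y' = F x y by rw [this]
    rcases hQ x y with hxy | hxy <;> rw [hxy] at hmax hT ⊢
    · exact apply_eq_of_isGreatest hQ habs hinj hext hT hx' hy hy' hmax hxx' hyy' hxy
    · exact apply_eq_of_isGreatest (F := fun a b => F b a) (fun a b => (hQ b a).symm)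
        (fun t ht z hz => (habs t ht z hz).symm) hinj hext hT hy' hx hx' hmax hyy' hxx' hxy
  · exact hmin _ (hQ.apply_mem hx' hy')

lemma MonotoneOn₂.union (hQ : Quasitrivial F) (hs : MonotoneOn₂ F f s)
    (habs : ∀ t ∈ T, ∀ z ∈ s, F t z = t ∧ F z t = t) (hinj : InjOn f (s ∪ T))
    (hext : ∀ t ∈ T, (∀ z ∈ s ∪ T, f z ≤ f t) ∨ (∀ z ∈ s ∪ T, f t ≤ f z)) :
    MonotoneOn₂ F f (s ∪ T) := by
  intro x x' y y' hx hx' hy hy' hxx' hyy'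
  by_cases hT : F x y ∈ T
  · exact apply_le_of_apply_mem hQ habs hinj hext hx hx' hy hy' hxx' hyy' hT
  by_cases hT' : F x' y' ∈ T
  · exact apply_le_of_apply_mem (f := toDual ∘ f) hQ habs (toDual.injective.comp_injOn hinj)
      (fun t ht => (hext t ht).symm) hx' hx hy' hy hxx' hyy' hT'
  have mem_s : ∀ {a b}, a ∈ s ∪ T → b ∈ s ∪ T → F a b ∉ T → a ∈ s ∧ b ∈ s :=
    fun ha hb h => ⟨ha.resolve_right fun haT => h (apply_mem_of_absorbs hQ habs ha hb (.inl haT)),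
      hb.resolve_right fun hbT => h (apply_mem_of_absorbs hQ habs ha hb (.inr hbT))⟩
  exact hs (mem_s hx hy hT).1 (mem_s hx' hy' hT').1 (mem_s hx hy hT).2 (mem_s hx' hy' hT').2
    hxx' hyy'

end Extension

lemma exists_extension {X : Type*} {F : X → X → X} (hQ : Quasitrivial F)
    {s T : Set X} (hs : s.Finite) {f : X → ℤ} (hinj : InjOn f s) (hmono : MonotoneOn₂ F f s)
    (hdisj : Disjoint s T) (habs : ∀ t ∈ T, ∀ z ∈ s, F t z = t ∧ F z t = t) {u v : X}
    (hT : T ⊆ {u, v}) : ∃ g : X → ℤ, InjOn g (s ∪ T) ∧ MonotoneOn₂ F g (s ∪ T) := by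
  classical
  obtain ⟨M, hM0, hM⟩ : ∃ M : ℤ, 0 ≤ M ∧ ∀ z ∈ s, |f z| ≤ M := by
    obtain ⟨M, hM⟩ := (hs.image fun z => |f z|).bddAbove
    exact ⟨max M 0, le_max_right _ _,
      fun z hz => (hM (mem_image_of_mem _ hz)).trans (le_max_left _ _)⟩
  set g := T.piecewise (fun x => if x = u then -(M + 1) else M + 1) f
  have hgs : EqOn g f s := fun z hz => piecewise_eq_of_notMem _ _ _ (hdisj.notMem_of_mem_left hz)
  have hgT : ∀ t ∈ T, g t = if t = u then -(M + 1) else M + 1 :=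
    fun t ht => piecewise_eq_of_mem _ _ _ ht
  have hbound : ∀ z ∈ s ∪ T, -(M + 1) ≤ g z ∧ g z ≤ M + 1 := by
    rintro z (hz | hz)
    · have := abs_le.1 (hM z hz)
      rw [hgs hz]; omega
    · rw [hgT z hz]; split_ifs <;> omega
  have hinj' : InjOn g (s ∪ T) := by
    refine (injOn_union hdisj).2
      ⟨hinj.congr hgs.symm, fun t ht t' ht' h => ?_, fun z hz t ht h => ?_⟩
    · have hv : ∀ w ∈ T, w ≠ u → w = v := fun w hw hwu => (hT hw).resolve_left hwu
      rw [hgT t ht, hgT t' ht'] at h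
      by_cases htu : t = u <;> by_cases ht'u : t' = u <;>
        simp only [htu, ht'u, if_true, if_false] at h
      · rw [htu, ht'u]
      · omega
      · omega
      · rw [hv t ht htu, hv t' ht' ht'u]
    · have := abs_le.1 (hM z hz)
      rw [hgs hz, hgT t ht] at h
      split_ifs at h <;> omega
  refine ⟨g, hinj', (hmono.congr hQ hgs.symm).union hQ habs hinj' fun t ht => ?_⟩
  rw [hgT t ht]
  split_ifs
  · exact .inr fun z hz => (hbound z hz).1
  · exact .inl fun z hz => (hbound z hz).2

section TopClass

variable {X : Type*} {F : X → X → X} {S : Set X}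

def topClass (F : X → X → X) (S : Set X) : Set X := {x ∈ S | ∀ y ∈ S, wle F y x}

lemma topClass_subset : topClass F S ⊆ S := sep_subset _ _

lemma topClass_nonempty [Finite X] (hA : Assoc F) (hQ : Quasitrivial F) (hS : S.Nonempty) :
    (topClass F S).Nonempty := by
  obtain ⟨t, ht⟩ := S.toFinite.exists_maximalFor (fun x => {y | wle F y x}) S hS
  refine ⟨t, ht.1, fun y hy => (wle_total hQ y t).elim id fun hty => ?_⟩
  exact ht.2 hy (fun z hz => wle_trans hA hQ hz hty) (wle_refl hQ y)

lemma sim_of_mem_topClass {x y : X} (hx : x ∈ topClass F S) (hy : y ∈ topClass F S) :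
    SIM (wle F) x y :=
  ⟨hy.2 x hx.1, hx.2 y hy.1⟩

lemma slt_of_mem_diff_topClass (hA : Assoc F) (hQ : Quasitrivial F) {a b : X}
    (ha : a ∈ S \ topClass F S) (hb : b ∈ topClass F S) : SLT (wle F) a b :=
  ⟨hb.2 a ha.1, fun hba => ha.2 ⟨ha.1, fun y hy => wle_trans hA hQ (hb.2 y hy) hba⟩⟩

lemma exists_topClass_subset_pair (hA : Assoc F) (hQ : Quasitrivial F)
    (hT : TwoQuasilinear (wle F)) {a : X} (ha : a ∈ S \ topClass F S) :
    ∃ u v, topClass F S ⊆ {u, v} := by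
  by_contra! h
  obtain ⟨b, hb, hab⟩ := not_subset.1 (h a a)
  obtain ⟨c, hc, hbc⟩ := not_subset.1 (h b b)
  obtain ⟨d, hd, hbcd⟩ := not_subset.1 (h b c)
  simp only [mem_insert_iff, mem_singleton_iff, not_or] at hbc hbcd
  have hne : ∀ x ∈ topClass F S, a ≠ x := fun x hx hax => ha.2 (hax ▸ hx)
  exact hT ⟨a, b, c, d, ⟨hne b hb, hne c hc, hne d hd, Ne.symm hbc.1, Ne.symm hbcd.1,
    Ne.symm hbcd.2⟩, slt_of_mem_diff_topClass hA hQ ha hb, sim_of_mem_topClass hb hc,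
    sim_of_mem_topClass hc hd⟩

end TopClass

lemma exists_injOn_monotoneOn₂ {X : Type*} [Finite X] {F : X → X → X} (hA : Assoc F)
    (hQ : Quasitrivial F) (hT : TwoQuasilinear (wle F)) (S : Set X) :
    ∃ f : X → ℤ, InjOn f S ∧ MonotoneOn₂ F f S := by
  induction S using WellFoundedLT.induction with
  | _ S ih =>
  rcases (S \ topClass F S).eq_empty_or_nonempty with hS | ⟨a, ha⟩
  · have hST : S ⊆ topClass F S := sdiff_eq_empty.1 hS
    obtain ⟨e, he⟩ := exists_injective_nat X
    exact ⟨fun x => e x, (Nat.cast_injective.comp he).injOn, .of_proj <| proj_of_forall_sim hA hQ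
      fun x hx y hy => sim_of_mem_topClass (hST hx) (hST hy)⟩
  obtain ⟨f, hinj, hmono⟩ := ih (S \ topClass F S)
    (topClass_subset.sdiff_ssubset_of_nonempty (topClass_nonempty hA hQ ⟨a, ha.1⟩))
  obtain ⟨u, v, huv⟩ := exists_topClass_subset_pair hA hQ hT ha
  rw [← sdiff_union_of_subset (topClass_subset (F := F) (S := S))]
  exact exists_extension hQ (toFinite _) hinj hmono disjoint_sdiff_left
    (fun t ht z hz => (absorb_of_slt hQ (slt_of_mem_diff_topClass hA hQ hz ht)).symm) huv

section Forward

variable {X : Type*} {F : X → X → X} {le : X → X → Prop}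

lemma false_of_absorbs_of_le_of_le [IsLinearOrder X le] (hQ : Quasitrivial F)
    (hmono : ∀ x x' y y', le x x' → le y y' → le (F x y) (F x' y')) {a u v : X}
    (huv : u ≠ v) (hsim : SIM (wle F) u v) (hu : F a u = u ∧ F u a = u)
    (hv : F a v = v ∧ F v a = v) (hau : le a u) (hav : le a v) : False := by
  rcases proj_of_sim hQ hsim with ⟨h₁, h₂⟩ | ⟨h₁, h₂⟩
  · have hvu := hmono a u v v hau (refl_of le v)
    have huv' := hmono a v u u hav (refl_of le u)
    rw [hv.1, h₁] at hvu
    rw [hu.1, h₂] at huv'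
    exact huv (antisymm huv' hvu)
  · have huv' := hmono u u a v (refl_of le u) hav
    have hvu := hmono v v a u (refl_of le v) hau
    rw [hu.2, h₁] at huv'
    rw [hv.2, h₂] at hvu
    exact huv (antisymm huv' hvu)

lemma twoQuasilinear_wle_of_monotone (hA : Assoc F) (hQ : Quasitrivial F)
    [IsLinearOrder X le] (hmono : ∀ x x' y y', le x x' → le y y' → le (F x y) (F x' y')) :
    TwoQuasilinear (wle F) := by
  rintro ⟨a, b, c, d, ⟨-, -, -, hbc, hbd, hcd⟩, hab, hsbc, hscd⟩
  have hsbd := hsbc.trans hA hQ hscd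
  have hb := absorb_of_slt hQ hab
  have hc := absorb_of_slt hQ (slt_of_slt_of_wle hA hQ hab hsbc.1)
  have hd := absorb_of_slt hQ (slt_of_slt_of_wle hA hQ hab hsbd.1)
  -- two of `b, c, d` lie on the same side of `a`
  suffices ∀ (r : X → X → Prop) [IsLinearOrder X r],
      (∀ x x' y y', r x x' → r y y' → r (F x y) (F x' y')) → r a b → False by
    exact (total_of le a b).elim (this le hmono)
      (this (swap le) fun _ _ _ _ h h' => hmono _ _ _ _ h h')
  intro r _ hr hrab
  have hca : r c a := (total_of r a c).resolve_left
    (false_of_absorbs_of_le_of_le hQ hr hbc hsbc hb hc hrab)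
  have hda : r d a := (total_of r a d).resolve_left
    (false_of_absorbs_of_le_of_le hQ hr hbd hsbd hb hd hrab)
  exact false_of_absorbs_of_le_of_le (le := swap r) hQ (fun _ _ _ _ h h' => hr _ _ _ _ h h')
    hcd hscd hc hd hca hda

end Forward

theorem stmt_14 {X : Type*} [Finite X] (F : X → X → X)
    (hA : Assoc F) (hQ : Quasitrivial F) :
    (∃ le : X → X → Prop, IsLinearOrder X le ∧
        ∀ x x' y y' : X, le x x' → le y y' → le (F x y) (F x' y')) ↔
      TwoQuasilinear (wle F) := by
  refine ⟨fun ⟨le, hle, hmono⟩ => twoQuasilinear_wle_of_monotone hA hQ hmono, fun hT => ?_⟩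
  obtain ⟨f, hinj, hmono⟩ := exists_injOn_monotoneOn₂ hA hQ hT univ
  let : LinearOrder X := LinearOrder.lift' f (injOn_univ.1 hinj)
  exact ⟨(· ≤ ·), inferInstance, fun x x' y y' => hmono trivial trivial trivial trivial⟩
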